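/- Let S be a finite nonempty type, A a finite nonempty type, g : S → A → ℝ a bounded cost, P : S → A → S → ℝ≥0 transition kernels with ∑_{s'} P s a s' = 1, and 0 < γ < 1. Then the Bellman operator (TV)(s) = min_{a} ∑_{s'} P s a s' · (g s a + γ · V s') is a contraction on the space of functions S → ℝ with the sup norm, with Lipschitz constant γ. -/
import Mathlib


open Finset

/-- The discounted Bellman optimality operator of a finite MDP is a
`γ`-contraction in the sup norm. -/
theorem stmt_5 {S A : Type*} [Fintype S] [Nonempty S] [Fintype A] [Nonempty A]
    (g : S → A → ℝ) (P : S → A → S → ℝ)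
    (hP : ∀ s a s', 0 ≤ P s a s') (hsum : ∀ s a, ∑ s', P s a s' = 1)
    (γ : ℝ) (hγ0 : 0 < γ) (hγ1 : γ < 1)
    (T : (S → ℝ) → (S → ℝ))
    (hT : ∀ V s, T V s = ⨅ a : A, ∑ s', P s a s' * (g s a + γ * V s')) :
    ∀ V W : S → ℝ, (⨆ s, |T V s - T W s|) ≤ γ * ⨆ s, |V s - W s| := by
  intro V W
  set M : ℝ := ⨆ s, |V s - W s| with hM
  have hMle : ∀ s, |V s - W s| ≤ M := fun s =>
    le_ciSup (f := fun t => |V t - W t|) (Set.Finite.bddAbove (Set.finite_range _)) s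
  -- key: for any s and functions, the per-action difference bound
  have key : ∀ s (X Y : S → ℝ), (∀ t, |X t - Y t| ≤ M) →
      T X s ≤ T Y s + γ * M := by
    intro s X Y h
    rw [hT, hT]
    have hb : BddBelow (Set.range fun a : A => ∑ s', P s a s' * (g s a + γ * Y s')) :=
      Set.Finite.bddBelow (Set.finite_range _)
    rw [ciInf_add hb]
    refine le_ciInf fun a => ?_
    refine le_trans (ciInf_le (Set.Finite.bddBelow (Set.finite_range _)) a) ?_
    have : ∑ s', P s a s' * (g s a + γ * X s')
        ≤ ∑ s', (P s a s' * (g s a + γ * Y s') + P s a s' * (γ * M)) := by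
      refine Finset.sum_le_sum fun t _ => ?_
      have h1 : X t ≤ Y t + M := by
        have := (abs_le.mp (h t)).2; linarith
      nlinarith [mul_le_mul_of_nonneg_left h1 (mul_nonneg (hP s a t) hγ0.le)]
    refine this.trans (le_of_eq ?_)
    rw [Finset.sum_add_distrib, ← Finset.sum_mul, hsum, one_mul]
  have habs : ∀ s, |T V s - T W s| ≤ γ * M := by
    intro s
    rw [abs_le]
    constructor
    · have := key s W V fun t => by rw [abs_sub_comm]; exact hMle t
      linarith
    · have := key s V W hMle
      linarith
  exact ciSup_le habs
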